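/- Let G = (V,E) be a finite connected graph and construct G' from G by adding, for each edge e = uv ∈ E, a set K_e of m ≥ 1 new vertices forming a clique, joined completely to both u and v. Assign weight 0 to every original edge of E and weight 1 to every newly added edge. Then for every minimum spanning tree T' of G', the set of original edges contained in T' (i.e., T' ∩ E) forms a spanning tree of G. -/

import Mathlib

open Classical

/-- The total weight of (the edges of) a graph `T`, viewed as a candidate spanning tree. -/
noncomputable def treeWeight {V : Type*} [Finite V] (w : Sym2 V → ℝ) (T : SimpleGraph V) : ℝ :=
  ∑ e ∈ T.edgeSet.toFinite.toFinset, w e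

/-- `T` is a spanning tree of `G`: a subgraph of `G` (on the same vertex set) that is a tree. -/
def IsSpanningTree {V : Type*} (G T : SimpleGraph V) : Prop := T ≤ G ∧ T.IsTree

/-- `T` is a minimum spanning tree of `(G, w)`. -/
def IsMST {V : Type*} [Finite V] (G : SimpleGraph V) (w : Sym2 V → ℝ)
    (T : SimpleGraph V) : Prop :=
  IsSpanningTree G T ∧ ∀ T', IsSpanningTree G T' → treeWeight w T ≤ treeWeight w T'

/-- The graph `G'` obtained from `G` by adding, for each edge `e` of `G`, a clique `K_e` of `m`
new vertices, each joined to both endpoints of `e`. -/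
def augGraph {V : Type*} (G : SimpleGraph V) (m : ℕ) :
    SimpleGraph (V ⊕ (G.edgeSet × Fin m)) where
  Adj a b :=
    match a, b with
    | Sum.inl u, Sum.inl v => G.Adj u v
    | Sum.inl u, Sum.inr p => u ∈ (p.1 : Sym2 V)
    | Sum.inr p, Sum.inl u => u ∈ (p.1 : Sym2 V)
    | Sum.inr p, Sum.inr q => p.1 = q.1 ∧ p.2 ≠ q.2
  symm := by
    refine ⟨?_⟩
    rintro (u | ⟨e, i⟩) (v | ⟨f, j⟩) h
    · exact G.adj_symm h
    · exact h
    · exact h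
    · exact ⟨h.1.symm, h.2.symm⟩
  loopless := by
    refine ⟨?_⟩
    rintro (u | ⟨e, i⟩) h
    · exact G.ne_of_adj h rfl
    · exact h.2 rfl

/-!
A spanning tree of `G'` has `|V| + m|E| - 1` edges. Hanging every new vertex by a single edge
onto a spanning tree of `G` gives a spanning tree of `G'` of weight `m|E|`, so a minimum spanning
tree `T'` has at most `m|E|` new edges, hence at least `|V| - 1` original ones. Those form an
acyclic graph on `V`, being a subgraph of `T'`, and an acyclic graph on `V` with `|V| - 1` edges
is a tree.
-/

namespace SimpleGraph

variable {V W : Type*}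

theorem IsAcyclic.isTree_of_card_vert_le_ncard_edgeSet_add_one [Finite V] [Nonempty V]
    {H : SimpleGraph V} (hH : H.IsAcyclic) (hcard : Nat.card V ≤ H.edgeSet.ncard + 1) :
    H.IsTree := by
  obtain ⟨F, hHF, -, hF⟩ := connected_top.exists_isTree_le_of_le_of_isAcyclic le_top hH
  have hFcard := (isTree_iff_connected_and_card.mp hF).2
  rw [Nat.card_coe_set_eq] at hFcard
  have hedges : H.edgeSet = F.edgeSet :=
    Set.eq_of_subset_of_ncard_le (edgeSet_mono hHF) (by omega)
  exact edgeSet_inj.mp hedges ▸ hF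

theorem ncard_edgeSet_comap_inl (T : SimpleGraph (V ⊕ W)) :
    (T.comap Sum.inl).edgeSet.ncard = (T.edgeSet ∩ Set.range (Sym2.map Sum.inl)).ncard := by
  rw [← Set.ncard_preimage_of_injective_subset_range (Sym2.map.injective Sum.inl_injective)
    Set.inter_subset_right]
  congr 1
  ext e
  induction e using Sym2.ind
  simp

theorem IsTree.comap_inl [Finite V] [Finite W] [Nonempty V] {T : SimpleGraph (V ⊕ W)}
    (hT : T.IsTree) (hcross : (T.edgeSet \ Set.range (Sym2.map Sum.inl)).ncard ≤ Nat.card W) :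
    (T.comap Sum.inl).IsTree := by
  have hacyclic : (T.comap Sum.inl).IsAcyclic := hT.isAcyclic.of_comap .inl
  refine hacyclic.isTree_of_card_vert_le_ncard_edgeSet_add_one ?_
  have hTcard := (isTree_iff_connected_and_card.mp hT).2
  rw [Nat.card_coe_set_eq, Nat.card_sum] at hTcard
  have hsplit := Set.ncard_inter_add_ncard_sdiff_eq_ncard T.edgeSet (Set.range (Sym2.map Sum.inl))
  rw [ncard_edgeSet_comap_inl]
  omega

theorem exists_isTree_le_ncard_edgeSet_diff_range_inl_le [Finite W] {G : SimpleGraph (V ⊕ W)}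
    (hconn : (G.comap Sum.inl).Connected) (hattach : ∀ w, ∃ v, G.Adj (Sum.inr w) (Sum.inl v)) :
    ∃ S ≤ G, S.IsTree ∧ (S.edgeSet \ Set.range (Sym2.map Sum.inl)).ncard ≤ Nat.card W := by
  choose f hf using hattach
  let pendant : W → Sym2 (V ⊕ W) := fun w => s(Sum.inr w, Sum.inl (f w))
  let G₁ := G ⊓ fromEdgeSet (Set.range (Sym2.map Sum.inl) ∪ Set.range pendant)
  let incl : G.comap Sum.inl →g G₁ :=
    ⟨Sum.inl, fun {u v} huv =>
      ⟨huv, Or.inl ⟨s(u, v), rfl⟩, Sum.inl_injective.ne huv.ne⟩⟩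
  have hpendant (w : W) : G₁.Adj (Sum.inr w) (Sum.inl (f w)) :=
    ⟨hf w, Or.inr ⟨w, rfl⟩, Sum.inr_ne_inl⟩
  have hG₁ : G₁.Connected := by
    obtain ⟨v₀⟩ := hconn.nonempty
    refine (connected_iff_exists_forall_reachable _).mpr ⟨Sum.inl v₀, ?_⟩
    rintro (v | w)
    · exact (hconn.preconnected v₀ v).map incl
    · exact ((hconn.preconnected v₀ (f w)).map incl).trans (hpendant w).reachable.symm
  obtain ⟨S, hSG₁, hS⟩ := hG₁.exists_isTree_le
  refine ⟨S, hSG₁.trans inf_le_left, hS, ?_⟩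
  have hsub : S.edgeSet \ Set.range (Sym2.map Sum.inl) ⊆ Set.range pendant := by
    rintro e ⟨heS, heV⟩
    have he := edgeSet_mono (hSG₁.trans inf_le_right) heS
    rw [edgeSet_fromEdgeSet] at he
    exact he.1.resolve_left heV
  calc _ ≤ (Set.range pendant).ncard := Set.ncard_le_ncard hsub
    _ = Nat.card (Set.range pendant) := (Nat.card_coe_set_eq _).symm
    _ ≤ Nat.card W := Finite.card_range_le _

end SimpleGraph

open SimpleGraph

theorem treeWeight_ite_mem_zero_one {V : Type*} [Finite V] (s : Set (Sym2 V))
    (T : SimpleGraph V) :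
    treeWeight (fun e => if e ∈ s then (0 : ℝ) else 1) T = (T.edgeSet \ s).ncard := by
  rw [treeWeight, Finset.sum_ite, Finset.sum_const_zero, Finset.sum_const, nsmul_one, zero_add,
    Set.ncard_eq_toFinset_card _ (T.edgeSet.toFinite.sdiff)]
  congr 2
  ext e
  simp

section augGraph

variable {V : Type*} (G : SimpleGraph V) (m : ℕ)

theorem augGraph_comap_inl : (augGraph G m).comap Sum.inl = G := by
  ext u v
  rfl

variable {G m} {T : SimpleGraph (V ⊕ (G.edgeSet × Fin m))}

theorem treeWeight_of_le_augGraph [Finite V] (hT : T ≤ augGraph G m) :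
    treeWeight (fun e => if e ∈ Sym2.map Sum.inl '' G.edgeSet then (0 : ℝ) else 1) T =
      (T.edgeSet \ Set.range (Sym2.map Sum.inl)).ncard := by
  rw [treeWeight_ite_mem_zero_one]
  congr 2
  ext e
  refine and_congr_right fun he => not_congr
    ⟨fun ⟨f, _, hf⟩ => ⟨f, hf⟩, fun ⟨f, hf⟩ => ⟨f, ?_, hf⟩⟩
  subst hf
  induction f using Sym2.ind
  exact hT he

theorem fromEdgeSet_eq_comap_inl_of_le_augGraph (hT : T ≤ augGraph G m) :
    fromEdgeSet {f | f ∈ G.edgeSet ∧ Sym2.map Sum.inl f ∈ T.edgeSet} = T.comap Sum.inl := by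
  ext u v
  simp only [fromEdgeSet_adj, Set.mem_ofPred_eq, mem_edgeSet, Sym2.map_mk, comap_adj]
  exact ⟨fun h => h.1.2, fun h => ⟨⟨hT h, h⟩, ne_of_apply_ne Sum.inl (hT h).ne⟩⟩

end augGraph

theorem augGraph_mst_restricts_to_spanning_tree_general {V : Type*} [Fintype V] (G : SimpleGraph V)
    (hG : G.Connected) (m : ℕ)
    (T' : SimpleGraph (V ⊕ (G.edgeSet × Fin m)))
    (hT' : IsMST (augGraph G m)
      (fun e => if e ∈ Sym2.map Sum.inl '' G.edgeSet then (0 : ℝ) else 1) T') :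
    IsSpanningTree G
      (SimpleGraph.fromEdgeSet {f | f ∈ G.edgeSet ∧ Sym2.map Sum.inl f ∈ T'.edgeSet}) := by
  obtain ⟨⟨hT'le, hT'⟩, hmin⟩ := hT'
  have := hG.nonempty
  obtain ⟨S, hSle, hS, hScross⟩ :=
    exists_isTree_le_ncard_edgeSet_diff_range_inl_le (G := augGraph G m)
      (by rwa [augGraph_comap_inl]) fun p => ⟨_, Sym2.out_fst_mem (p.1 : Sym2 V)⟩
  have hcross := hmin S ⟨hSle, hS⟩
  rw [treeWeight_of_le_augGraph hT'le, treeWeight_of_le_augGraph hSle, Nat.cast_le] at hcross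
  rw [fromEdgeSet_eq_comap_inl_of_le_augGraph hT'le]
  exact ⟨(comap_monotone .inl hT'le).trans_eq (augGraph_comap_inl G m),
    hT'.comap_inl (hcross.trans hScross)⟩

/-- If every original edge of `G` gets weight `0` and every newly added edge gets weight `1`,
then the original edges contained in any minimum spanning tree of `G'` form a spanning tree
of `G`. -/
theorem augGraph_mst_restricts_to_spanning_tree {V : Type*} [Fintype V] (G : SimpleGraph V)
    (hG : G.Connected) (m : ℕ) (hm : 1 ≤ m)
    (T' : SimpleGraph (V ⊕ (G.edgeSet × Fin m)))
    (hT' : IsMST (augGraph G m)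
      (fun e => if e ∈ Sym2.map Sum.inl '' G.edgeSet then (0 : ℝ) else 1) T') :
    IsSpanningTree G
      (SimpleGraph.fromEdgeSet {f | f ∈ G.edgeSet ∧ Sym2.map Sum.inl f ∈ T'.edgeSet}) :=
  augGraph_mst_restricts_to_spanning_tree_general G hG m T' hT'
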